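/- Fix g > 0, Λ ≠ 0 and Y ∈ ℝ⁴, and define the BPST instanton potential A : ℝ⁴ → (Fin 4 → M₂(ℂ)) by A_n(y) := (2/(g·(‖y−Y‖²+Λ²))) · Σ_m (y−Y)_m · σ_{mn}, with field strength F_{mn}(y) := ∂_m A_n(y) − ∂_n A_m(y) + g·( A_m(y)·A_n(y) − A_n(y)·A_m(y) ), where ∂_m denotes the partial derivative in the m-th coordinate of ℝ⁴. Then F_{mn}(y) = (4Λ²/(g·(‖y−Y‖²+Λ²)²)) · σ_{mn} for all y ∈ ℝ⁴ and all m, n ∈ Fin 4; in particular F is self-dual: (1/2)·Σ_{k,l} ε(m,n,k,l)·F_{kl}(y) = F_{mn}(y). -/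

import Mathlib

/-!
Rescaling by the coupling gives `A^g = g⁻¹ A¹` and `F^g = g⁻¹ F¹`, so take `g = 1`. With
`x = y - Y` and `D = ‖x‖² + Λ²` the potential is `A_n = (2 / D) x_k σ_{kn}`, and the quotient rule
gives `∂_m A_n - ∂_n A_m = (4 / D) σ_{mn} - (4 / D²) (x_m x_k σ_{kn} - x_n x_k σ_{km})`.
Up to the factor `1/2`, the `σ_{mn}` are the imaginary quaternion units `σ₀, σ₁, σ₂` placed in
the self-dual pattern `σ₀₁ = σ₂₃, σ₀₂ = σ₃₁, σ₀₃ = σ₁₂`. The quaternion relations give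
`[x_k σ_{km}, x_l σ_{ln}] = x_m x_k σ_{kn} - x_n x_k σ_{km} - ‖x‖² σ_{mn}`, so the commutator
cancels the inhomogeneous part of the derivative and leaves `(4 / D - 4 ‖x‖² / D²) σ_{mn} =
(4 Λ² / D²) σ_{mn}`. Self-duality of `F` is then that of `σ_{mn}`.
-/

open Matrix

/-- The Pauli matrices `T₁, T₂, T₃`. -/
noncomputable def pauliT : Fin 3 → Matrix (Fin 2) (Fin 2) ℂ :=
  ![!![0, 1; 1, 0], !![0, -Complex.I; Complex.I, 0], !![1, 0; 0, -1]]

/-- The quaternionic basis `σ = (i T₁, i T₂, i T₃, 1)`. -/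
noncomputable def sigmaQ : Fin 4 → Matrix (Fin 2) (Fin 2) ℂ :=
  ![Complex.I • pauliT 0, Complex.I • pauliT 1, Complex.I • pauliT 2, 1]

/-- `σ̄_m = (σ_m)†`. -/
noncomputable def sigmaBarQ (m : Fin 4) : Matrix (Fin 2) (Fin 2) ℂ := (sigmaQ m)ᴴ

/-- The Lorentz generators `σ_{mn} = (1/4)(σ_m σ̄_n − σ_n σ̄_m)`. -/
noncomputable def sigmaLor (m n : Fin 4) : Matrix (Fin 2) (Fin 2) ℂ :=
  (1 / 4 : ℂ) • (sigmaQ m * sigmaBarQ n - sigmaQ n * sigmaBarQ m)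

/-- The totally antisymmetric symbol on `Fin 4`: `ε(m,n,k,l)` is the sign of the
permutation sending `(0,1,2,3)` to `(m,n,k,l)` when these are pairwise distinct,
and `0` otherwise (so `ε(0,1,2,3) = 1`). -/
noncomputable def eps4 (m n k l : Fin 4) : ℝ :=
  ∑ π : Equiv.Perm (Fin 4),
    if π 0 = m ∧ π 1 = n ∧ π 2 = k ∧ π 3 = l then ((Equiv.Perm.sign π : ℤ) : ℝ) else 0

/-- The partial derivative in the `m`-th coordinate of `ℝ⁴` of a matrix-entry-valued
function. -/
noncomputable def pder (m : Fin 4) (f : (Fin 4 → ℝ) → ℂ) (y : Fin 4 → ℝ) : ℂ :=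
  deriv (fun t : ℝ => f (Function.update y m t)) (y m)

/-- The BPST instanton potential
`A_n(y) = (2/(g(‖y−Y‖²+Λ²))) Σ_m (y−Y)_m σ_{mn}`. -/
noncomputable def bpstA (g Λ : ℝ) (Y : Fin 4 → ℝ) (y : Fin 4 → ℝ) (n : Fin 4) :
    Matrix (Fin 2) (Fin 2) ℂ :=
  (2 / (g * ((∑ m, (y m - Y m) ^ 2) + Λ ^ 2))) • ∑ m, (y m - Y m) • sigmaLor m n

/-- The field strength `F_{mn} = ∂_m A_n − ∂_n A_m + g [A_m, A_n]` of the BPST potential. -/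
noncomputable def bpstF (g Λ : ℝ) (Y : Fin 4 → ℝ) (y : Fin 4 → ℝ) (m n : Fin 4) :
    Matrix (Fin 2) (Fin 2) ℂ :=
  (Matrix.of fun i j : Fin 2 =>
      pder m (fun z => bpstA g Λ Y z n i j) y - pder n (fun z => bpstA g Λ Y z m i j) y)
    + g • (bpstA g Λ Y y m * bpstA g Λ Y y n - bpstA g Λ Y y n * bpstA g Λ Y y m)

lemma sigmaQ_three : sigmaQ 3 = 1 := rfl

lemma sigmaBarQ_three : sigmaBarQ 3 = 1 := by
  simp [sigmaBarQ, sigmaQ]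

lemma sigmaBarQ_of_ne_three {a : Fin 4} (ha : a ≠ 3) : sigmaBarQ a = -sigmaQ a := by
  ext i j
  fin_cases a <;> fin_cases i <;> fin_cases j <;>
    simp_all [sigmaBarQ, sigmaQ, pauliT, Matrix.conjTranspose_apply]

lemma sigmaQ_mul_self_of_ne_three {a : Fin 4} (ha : a ≠ 3) : sigmaQ a * sigmaQ a = -1 := by
  ext i j
  fin_cases a <;> fin_cases i <;> fin_cases j <;>
    simp_all [sigmaQ, pauliT, Matrix.mul_apply, Fin.sum_univ_two]

lemma sigmaQ_zero_mul_one : sigmaQ 0 * sigmaQ 1 = -sigmaQ 2 := by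
  ext i j; fin_cases i <;> fin_cases j <;> simp [sigmaQ, pauliT, Matrix.mul_apply]

lemma sigmaQ_one_mul_zero : sigmaQ 1 * sigmaQ 0 = sigmaQ 2 := by
  ext i j; fin_cases i <;> fin_cases j <;> simp [sigmaQ, pauliT, Matrix.mul_apply]

lemma sigmaQ_one_mul_two : sigmaQ 1 * sigmaQ 2 = -sigmaQ 0 := by
  ext i j; fin_cases i <;> fin_cases j <;> simp [sigmaQ, pauliT, Matrix.mul_apply]

lemma sigmaQ_two_mul_one : sigmaQ 2 * sigmaQ 1 = sigmaQ 0 := by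
  ext i j; fin_cases i <;> fin_cases j <;> simp [sigmaQ, pauliT, Matrix.mul_apply]

lemma sigmaQ_two_mul_zero : sigmaQ 2 * sigmaQ 0 = -sigmaQ 1 := by
  ext i j; fin_cases i <;> fin_cases j <;> simp [sigmaQ, pauliT, Matrix.mul_apply]

lemma sigmaQ_zero_mul_two : sigmaQ 0 * sigmaQ 2 = sigmaQ 1 := by
  ext i j; fin_cases i <;> fin_cases j <;> simp [sigmaQ, pauliT, Matrix.mul_apply]

lemma sigmaLor_antisymm (m n : Fin 4) : sigmaLor n m = -sigmaLor m n := by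
  rw [sigmaLor, sigmaLor, ← smul_neg, neg_sub]

lemma sigmaLor_self (m : Fin 4) : sigmaLor m m = 0 := by
  simp [sigmaLor]

lemma sigmaLor_zero_one : sigmaLor 0 1 = (1 / 2 : ℝ) • sigmaQ 2 := by
  simp (disch := decide) only [sigmaLor, sigmaBarQ_of_ne_three, mul_neg, sigmaQ_zero_mul_one,
    sigmaQ_one_mul_zero]
  module

lemma sigmaLor_zero_two : sigmaLor 0 2 = -((1 / 2 : ℝ) • sigmaQ 1) := by
  simp (disch := decide) only [sigmaLor, sigmaBarQ_of_ne_three, mul_neg, sigmaQ_zero_mul_two,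
    sigmaQ_two_mul_zero]
  module

lemma sigmaLor_one_two : sigmaLor 1 2 = (1 / 2 : ℝ) • sigmaQ 0 := by
  simp (disch := decide) only [sigmaLor, sigmaBarQ_of_ne_three, mul_neg, sigmaQ_one_mul_two,
    sigmaQ_two_mul_one]
  module

lemma sigmaLor_three {a : Fin 4} (ha : a ≠ 3) : sigmaLor a 3 = (1 / 2 : ℝ) • sigmaQ a := by
  simp only [sigmaLor, sigmaBarQ_of_ne_three ha, sigmaBarQ_three, sigmaQ_three, mul_one, one_mul]
  module

lemma sigmaLor_zero_one_eq_two_three : sigmaLor 0 1 = sigmaLor 2 3 := by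
  rw [sigmaLor_zero_one, sigmaLor_three (by decide)]

lemma sigmaLor_zero_two_eq_three_one : sigmaLor 0 2 = sigmaLor 3 1 := by
  rw [sigmaLor_zero_two, sigmaLor_antisymm, sigmaLor_three (by decide)]

lemma sigmaLor_zero_three_eq_one_two : sigmaLor 0 3 = sigmaLor 1 2 := by
  rw [sigmaLor_three (by decide), sigmaLor_one_two]

noncomputable def sigmaLorDot (x : Fin 4 → ℝ) (n : Fin 4) : Matrix (Fin 2) (Fin 2) ℂ :=
  ∑ k, x k • sigmaLor k n

lemma sigmaLorDot_commutator (x : Fin 4 → ℝ) (m n : Fin 4) :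
    sigmaLorDot x m * sigmaLorDot x n - sigmaLorDot x n * sigmaLorDot x m =
      x m • sigmaLorDot x n - x n • sigmaLorDot x m - (∑ k, x k ^ 2) • sigmaLor m n := by
  fin_cases m <;> fin_cases n <;>
  simp (disch := decide) only [sigmaLorDot, Fin.sum_univ_four, sigmaLor_self,
    sigmaLor_antisymm 0 1, sigmaLor_antisymm 0 2, sigmaLor_antisymm 0 3, sigmaLor_antisymm 1 2,
    sigmaLor_antisymm 1 3, sigmaLor_antisymm 2 3, sigmaLor_zero_one, sigmaLor_zero_two,
    sigmaLor_one_two, sigmaLor_three, Fin.isValue, Fin.reduceFinMk] <;>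
  simp (disch := decide) only [smul_zero, zero_add, add_zero, smul_neg, smul_mul_assoc,
    mul_smul_comm, mul_add, add_mul, neg_mul, mul_neg, sigmaQ_zero_mul_one, sigmaQ_one_mul_zero,
    sigmaQ_one_mul_two, sigmaQ_two_mul_one, sigmaQ_two_mul_zero, sigmaQ_zero_mul_two,
    sigmaQ_mul_self_of_ne_three] <;>
  module

-- The Vandermonde product of a permutation of `(0, 1, 2, 3)` is its sign times `1! 2! 3! = 12`.
lemma eps4_eq_vandermonde (m n k l : Fin 4) :
    eps4 m n k l = ((n : ℝ) - m) * (k - m) * (l - m) * (k - n) * (l - n) * (l - k) / 12 := by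
  have h : ∀ m n k l : Fin 4, 12 * (∑ π : Equiv.Perm (Fin 4),
      if π 0 = m ∧ π 1 = n ∧ π 2 = k ∧ π 3 = l then (Equiv.Perm.sign π : ℤ) else 0) =
      ((n : ℤ) - m) * (k - m) * (l - m) * (k - n) * (l - n) * (l - k) := by
    decide
  rw [eq_div_iff (by norm_num), mul_comm, eps4]
  exact_mod_cast h m n k l

lemma half_sum_eps4_smul_eq_self {M : Type*} [AddCommGroup M] [Module ℝ M]
    (F : Fin 4 → Fin 4 → M) (hF : ∀ m n, F n m = -F m n)
    (h01 : F 0 1 = F 2 3) (h02 : F 0 2 = F 3 1) (h03 : F 0 3 = F 1 2) (m n : Fin 4) :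
    (1 / 2 : ℝ) • ∑ k, ∑ l, eps4 m n k l • F k l = F m n := by
  have hself : ∀ m, F m m = 0 := fun m => by
    linear_combination (norm := module) (1 / 2 : ℝ) • hF m m
  fin_cases m <;> fin_cases n <;> simp only [Fin.sum_univ_four, eps4_eq_vandermonde] <;>
    norm_num <;>
    simp only [Fin.isValue, Fin.reduceFinMk, hself, hF 0 1, hF 0 2, hF 0 3, hF 1 2, hF 1 3,
      hF 2 3, h01, h02, h03] <;>
    module

section Derivatives

variable {ι E : Type*} [DecidableEq ι] [NormedAddCommGroup E] [NormedSpace ℝ E]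

lemma hasDerivAt_update_apply (y : ι → ℝ) (m k : ι) :
    HasDerivAt (fun t => Function.update y m t k) (Pi.single (M := fun _ => ℝ) m 1 k) (y m) :=
  hasDerivAt_pi.1 (hasDerivAt_update y m (y m)) k

lemma hasDerivAt_sum_sq_sub_update [Fintype ι] (y Y : ι → ℝ) (m : ι) :
    HasDerivAt (fun t => ∑ k, (Function.update y m t k - Y k) ^ 2) (2 * (y m - Y m)) (y m) := by
  refine (HasDerivAt.fun_sum (u := Finset.univ) fun k _ =>
    ((hasDerivAt_update_apply y m k).sub_const (Y k)).fun_pow 2).congr_deriv ?_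
  simp [Pi.single_apply]

lemma hasDerivAt_sum_smul_sub_update [Fintype ι] (y Y : ι → ℝ) (c : ι → E) (m : ι) :
    HasDerivAt (fun t => ∑ k, (Function.update y m t k - Y k) • c k) (c m) (y m) := by
  refine (HasDerivAt.fun_sum (u := Finset.univ) fun k _ =>
    ((hasDerivAt_update_apply y m k).sub_const (Y k)).smul_const (c k)).congr_deriv ?_
  simp [Pi.single_apply]

end Derivatives

lemma pder_const_smul (c : ℝ) (f : (Fin 4 → ℝ) → ℂ) (m : Fin 4) (y : Fin 4 → ℝ) :
    pder m (fun z => c • f z) y = c • pder m f y :=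
  deriv_fun_const_smul_field c _

lemma pder_potential {Λ : ℝ} (hΛ : Λ ≠ 0) (Y y : Fin 4 → ℝ) (c : Fin 4 → ℂ) (m : Fin 4) :
    pder m (fun z => (2 / (∑ k, (z k - Y k) ^ 2 + Λ ^ 2)) • ∑ k, (z k - Y k) • c k) y =
      (-4 * (y m - Y m) / (∑ k, (y k - Y k) ^ 2 + Λ ^ 2) ^ 2) • ∑ k, (y k - Y k) • c k
        + (2 / (∑ k, (y k - Y k) ^ 2 + Λ ^ 2)) • c m := by
  have hD : ∑ k, (y k - Y k) ^ 2 + Λ ^ 2 ≠ 0 := by positivity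
  have hq := (hasDerivAt_sum_sq_sub_update y Y m).add_const (Λ ^ 2)
  have h := ((hasDerivAt_const (y m) (2 : ℝ)).fun_div hq
    (by rwa [Function.update_eq_self])).fun_smul (hasDerivAt_sum_smul_sub_update y Y c m)
  rw [Function.update_eq_self] at h
  rw [pder, h.deriv]
  match_scalars <;> ring

lemma bpstA_eq_inv_smul (g Λ : ℝ) (Y y : Fin 4 → ℝ) (n : Fin 4) :
    bpstA g Λ Y y n = g⁻¹ • bpstA 1 Λ Y y n := by
  rw [bpstA, bpstA, smul_smul]
  congr 1
  generalize (∑ m, (y m - Y m) ^ 2) + Λ ^ 2 = D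
  ring

lemma bpstF_eq_inv_smul (g Λ : ℝ) (Y y : Fin 4 → ℝ) (m n : Fin 4) :
    bpstF g Λ Y y m n = g⁻¹ • bpstF 1 Λ Y y m n := by
  have hcoupling : g * (g⁻¹ * g⁻¹) = g⁻¹ := by
    simpa only [inv_inv, mul_assoc] using inv_mul_mul_self g⁻¹
  simp only [bpstF, bpstA_eq_inv_smul g, Matrix.smul_apply, pder_const_smul, smul_add, one_smul]
  congr 1
  · ext i j
    simp [smul_sub]
  · rw [smul_mul_smul_comm, smul_mul_smul_comm, ← smul_sub, smul_smul, hcoupling]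

lemma bpstA_one (Λ : ℝ) (Y y : Fin 4 → ℝ) (n : Fin 4) :
    bpstA 1 Λ Y y n = (2 / (∑ k, (y k - Y k) ^ 2 + Λ ^ 2)) • sigmaLorDot (y - Y) n := by
  rw [bpstA, one_mul, sigmaLorDot]
  rfl

lemma pder_bpstA_one {Λ : ℝ} (hΛ : Λ ≠ 0) (Y y : Fin 4 → ℝ) (p q : Fin 4) (i j : Fin 2) :
    pder q (fun z => bpstA 1 Λ Y z p i j) y =
      ((-4 * (y q - Y q) / (∑ k, (y k - Y k) ^ 2 + Λ ^ 2) ^ 2) • sigmaLorDot (y - Y) p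
        + (2 / (∑ k, (y k - Y k) ^ 2 + Λ ^ 2)) • sigmaLor q p) i j := by
  simp only [bpstA_one, sigmaLorDot, Pi.sub_apply, Matrix.smul_apply, Matrix.sum_apply,
    Matrix.add_apply]
  exact pder_potential hΛ Y y (fun k => sigmaLor k p i j) q

lemma bpstF_one {Λ : ℝ} (hΛ : Λ ≠ 0) (Y y : Fin 4 → ℝ) (m n : Fin 4) :
    bpstF 1 Λ Y y m n = (4 * Λ ^ 2 / (∑ k, (y k - Y k) ^ 2 + Λ ^ 2) ^ 2) • sigmaLor m n := by
  have hderiv : (Matrix.of fun i j : Fin 2 =>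
      pder m (fun z => bpstA 1 Λ Y z n i j) y - pder n (fun z => bpstA 1 Λ Y z m i j) y) =
      ((-4 * (y m - Y m) / (∑ k, (y k - Y k) ^ 2 + Λ ^ 2) ^ 2) • sigmaLorDot (y - Y) n
        + (2 / (∑ k, (y k - Y k) ^ 2 + Λ ^ 2)) • sigmaLor m n) -
      ((-4 * (y n - Y n) / (∑ k, (y k - Y k) ^ 2 + Λ ^ 2) ^ 2) • sigmaLorDot (y - Y) m
        + (2 / (∑ k, (y k - Y k) ^ 2 + Λ ^ 2)) • sigmaLor n m) := by
    ext i j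
    simp only [Matrix.of_apply, Matrix.sub_apply, pder_bpstA_one hΛ]
  rw [bpstF, hderiv, bpstA_one, bpstA_one, one_smul, smul_mul_smul_comm, smul_mul_smul_comm,
    ← smul_sub, sigmaLorDot_commutator, sigmaLor_antisymm n m]
  simp only [Pi.sub_apply]
  match_scalars <;> field_simp <;> ring

lemma bpstF_eq (g : ℝ) {Λ : ℝ} (hΛ : Λ ≠ 0) (Y y : Fin 4 → ℝ) (m n : Fin 4) :
    bpstF g Λ Y y m n =
      (4 * Λ ^ 2 / (g * ((∑ k, (y k - Y k) ^ 2) + Λ ^ 2) ^ 2)) • sigmaLor m n := by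
  rw [bpstF_eq_inv_smul, bpstF_one hΛ, smul_smul]
  congr 1
  generalize (∑ k, (y k - Y k) ^ 2) + Λ ^ 2 = D
  ring

theorem bpst_field_strength_self_dual_general (g Λ : ℝ) (hΛ : Λ ≠ 0)
    (Y y : Fin 4 → ℝ) (m n : Fin 4) :
    bpstF g Λ Y y m n =
      (4 * Λ ^ 2 / (g * ((∑ k, (y k - Y k) ^ 2) + Λ ^ 2) ^ 2)) • sigmaLor m n ∧
    (1 / 2 : ℝ) • ∑ k, ∑ l, eps4 m n k l • bpstF g Λ Y y k l = bpstF g Λ Y y m n := by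
  have hF := bpstF_eq g hΛ Y y
  refine ⟨hF m n, half_sum_eps4_smul_eq_self _ (fun k l => ?_) ?_ ?_ ?_ m n⟩
  · rw [hF, hF, sigmaLor_antisymm, smul_neg]
  · rw [hF, hF, sigmaLor_zero_one_eq_two_three]
  · rw [hF, hF, sigmaLor_zero_two_eq_three_one]
  · rw [hF, hF, sigmaLor_zero_three_eq_one_two]

/-- **BPST field strength and self-duality.** For the BPST instanton,
`F_{mn}(y) = (4Λ²/(g(‖y−Y‖²+Λ²)²)) σ_{mn}`, and `F` is self-dual:
`(1/2) Σ_{k,l} ε(m,n,k,l) F_{kl}(y) = F_{mn}(y)`. -/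
theorem bpst_field_strength_self_dual (g Λ : ℝ) (hg : 0 < g) (hΛ : Λ ≠ 0)
    (Y y : Fin 4 → ℝ) (m n : Fin 4) :
    bpstF g Λ Y y m n =
      (4 * Λ ^ 2 / (g * ((∑ k, (y k - Y k) ^ 2) + Λ ^ 2) ^ 2)) • sigmaLor m n ∧
    (1 / 2 : ℝ) • ∑ k, ∑ l, eps4 m n k l • bpstF g Λ Y y k l = bpstF g Λ Y y m n :=
  bpst_field_strength_self_dual_general g Λ hΛ Y y m n
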